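/- arXiv:2212.03460 — 2 statements merged into one kernel-verified Lean document; each statement's English description precedes it below -/
import Mathlib

section
/- Let H be a finite type (the set of hubs), let β : H → H → ℝ be arc opening costs, and let a design be a function z : H → H → ℝ. Let R be a type of trips with weights p : R → ℝ and trip costs g : R → (H → H → ℝ) → ℝ (where g r z is the optimal cost of serving trip r under design z). Let T1 ⊆ T2 be finite sets of trips and let z1, z2 be designs such that: (i) z2 is at least as good as z1 for the T2-objective, i.e. (∑ h l, β h l * z2 h l) + ∑ r ∈ T2, p r * g r z2 ≤ (∑ h l, β h l * z1 h l) + ∑ r ∈ T2, p r * g r z1, and (ii) z1 is at least as good as z2 for the T1-objective, i.e. (∑ h l, β h l * z1 h l) + ∑ r ∈ T1, p r * g r z1 ≤ (∑ h l, β h l * z2 h l) + ∑ r ∈ T1, p r * g r z2. Then ∑ r ∈ T2 \ T1, p r * (g r z2 − g r z1) ≤ 0. -/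
/-- Exchange proposition (Section 3.2.4): if `z2` is at least as good as `z1` for the
`T2`-objective of the ODMTS-DFD and `z1` is at least as good as `z2` for the
`T1`-objective, with `T1 ⊆ T2`, then the weighted cost change of the trips in
`T2 \ T1` is nonpositive. -/
theorem exchange_proposition {H R : Type*} [Fintype H] [DecidableEq R]
    (β : H → H → ℝ) (p : R → ℝ) (g : R → (H → H → ℝ) → ℝ)
    (T1 T2 : Finset R) (hsub : T1 ⊆ T2) (z1 z2 : H → H → ℝ)
    (h1 : (∑ h, ∑ l, β h l * z2 h l) + ∑ r ∈ T2, p r * g r z2 ≤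
          (∑ h, ∑ l, β h l * z1 h l) + ∑ r ∈ T2, p r * g r z1)
    (h2 : (∑ h, ∑ l, β h l * z1 h l) + ∑ r ∈ T1, p r * g r z1 ≤
          (∑ h, ∑ l, β h l * z2 h l) + ∑ r ∈ T1, p r * g r z2) :
    ∑ r ∈ T2 \ T1, p r * (g r z2 - g r z1) ≤ 0 := by
  have hsplit : ∀ z : H → H → ℝ,
      ∑ r ∈ T2, p r * g r z = (∑ r ∈ T1, p r * g r z) + ∑ r ∈ T2 \ T1, p r * g r z := by
    intro z
    rw [← Finset.sum_sdiff hsub, add_comm]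
  simp only [mul_sub, Finset.sum_sub_distrib]
  rw [hsplit z1, hsplit z2] at h1
  linarith
end

section
/- Let H be a finite type, β : H → H → ℝ, designs z : H → H → ℝ, trips R with weights p : R → ℝ and costs g : R → (H → H → ℝ) → ℝ. Let T1 be a finite set of trips, r₀ ∉ T1 a trip with p r₀ > 0, and set T2 = T1 ∪ {r₀}. Suppose designs z1, z2 satisfy: (∑ h l, β h l * z2 h l) + ∑ r ∈ T2, p r * g r z2 ≤ (∑ h l, β h l * z1 h l) + ∑ r ∈ T2, p r * g r z1, and (∑ h l, β h l * z1 h l) + ∑ r ∈ T1, p r * g r z1 ≤ (∑ h l, β h l * z2 h l) + ∑ r ∈ T1, p r * g r z2. Then g r₀ z2 ≤ g r₀ z1. -/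
/-- Corollary of the exchange proposition (Section 3.2.4): when the larger trip set
adds a single trip `r₀` with positive rider count, the cost of `r₀` under the new
optimal design is no worse than under the old optimal design. -/
theorem exchange_corollary_singleton {H R : Type*} [Fintype H] [DecidableEq R]
    (β : H → H → ℝ) (p : R → ℝ) (g : R → (H → H → ℝ) → ℝ)
    (T1 : Finset R) (r₀ : R) (hr₀ : r₀ ∉ T1) (hp : 0 < p r₀)
    (T2 : Finset R) (hT2 : T2 = insert r₀ T1) (z1 z2 : H → H → ℝ)
    (h1 : (∑ h, ∑ l, β h l * z2 h l) + ∑ r ∈ T2, p r * g r z2 ≤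
          (∑ h, ∑ l, β h l * z1 h l) + ∑ r ∈ T2, p r * g r z1)
    (h2 : (∑ h, ∑ l, β h l * z1 h l) + ∑ r ∈ T1, p r * g r z1 ≤
          (∑ h, ∑ l, β h l * z2 h l) + ∑ r ∈ T1, p r * g r z2) :
    g r₀ z2 ≤ g r₀ z1 := by
  subst hT2
  rw [Finset.sum_insert hr₀, Finset.sum_insert hr₀] at h1
  have h3 : p r₀ * g r₀ z2 ≤ p r₀ * g r₀ z1 := by linarith
  exact le_of_mul_le_mul_left h3 hp
end
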